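/- arXiv:2508.06185 — 4 statements merged into one kernel-verified Lean document; each statement's English description precedes it below -/
import Mathlib

section
/- If A, B are matrices in SL(2,ℝ) with |tr(A)| ≤ 2, then tr(A B A⁻¹ B⁻¹) ≥ 2. -/
/-- The trace of an element of `SL(2, ℝ)`, viewed as a matrix. -/
noncomputable def trSL (A : Matrix.SpecialLinearGroup (Fin 2) ℝ) : ℝ :=
  Matrix.trace (A : Matrix (Fin 2) (Fin 2) ℝ)

lemma key_ineq (u b c v q r : ℝ) (h : u ^ 2 + 4 * (b * c) ≤ 0) :
    (u * q - b * v) * (u * r - c * v) ≤ (b * r - c * q) ^ 2 := by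
  rcases eq_or_ne u 0 with hu | hu
  · subst hu
    nlinarith [sq_nonneg (b * r - c * q), sq_nonneg v]
  · have hu2 : 0 < u ^ 2 := by positivity
    have hmain : 0 ≤ u ^ 2 * ((b * r - c * q) ^ 2 - (u * q - b * v) * (u * r - c * v)) := by
      set P := u * q - b * v with hP
      set Q := u * r - c * v with hQ
      have hid : u ^ 2 * ((b * r - c * q) ^ 2 - P * Q) =
          b ^ 2 * Q ^ 2 + c ^ 2 * P ^ 2 - (2 * (b * c) + u ^ 2) * (P * Q) := by
        rw [hP, hQ]; ring
      rw [hid]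
      rcases le_or_gt 0 (P * Q) with hpq | hpq
      · nlinarith [sq_nonneg (b * Q + c * P)]
      · nlinarith [sq_nonneg (b * Q - c * P)]
    nlinarith [hmain, hu2]

lemma entry_lemma (a b c d p q r s : ℝ) (h1 : a * d - b * c = 1)
    (h2 : p * s - q * r = 1) (hx : (a + d) ^ 2 ≤ 4) :
    2 ≤ -(d^2*q*r) + c*d*q*s - c*d*p*q + c^2*q^2 + b*d*r*s - b*d*p*r - b*c*s^2
        - b*c*p^2 + b^2*r^2 + 2*a*d*p*s - a*c*q*s + a*c*p*q - a*b*r*s + a*b*p*r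
        - a^2*q*r := by
  have hid : -(d^2*q*r) + c*d*q*s - c*d*p*q + c^2*q^2 + b*d*r*s - b*d*p*r - b*c*s^2
        - b*c*p^2 + b^2*r^2 + 2*a*d*p*s - a*c*q*s + a*c*p*q - a*b*r*s + a*b*p*r
        - a^2*q*r
      = 2 + (b*r - c*q)^2 - ((a-d)*q - b*(p-s)) * ((a-d)*r - c*(p-s)) := by
    linear_combination (2*p*s - 2*q*r) * h1 + 2 * h2
  rw [hid]
  have h : (a - d) ^ 2 + 4 * (b * c) ≤ 0 := by nlinarith
  have hk := key_ineq (a - d) b c (p - s) q r h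
  linarith

/-- If `A, B ∈ SL(2, ℝ)` and `|tr(A)| ≤ 2`, then `tr(A B A⁻¹ B⁻¹) ≥ 2`. -/
theorem trace_commutator_ge_two (A B : Matrix.SpecialLinearGroup (Fin 2) ℝ)
    (hA : |trSL A| ≤ 2) :
    2 ≤ trSL (A * B * A⁻¹ * B⁻¹) := by
  have h1 : (A : Matrix (Fin 2) (Fin 2) ℝ).det = 1 := A.2
  have h2 : (B : Matrix (Fin 2) (Fin 2) ℝ).det = 1 := B.2
  rw [Matrix.det_fin_two] at h1 h2
  set a := (A : Matrix (Fin 2) (Fin 2) ℝ) 0 0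
  set b := (A : Matrix (Fin 2) (Fin 2) ℝ) 0 1
  set c := (A : Matrix (Fin 2) (Fin 2) ℝ) 1 0
  set d := (A : Matrix (Fin 2) (Fin 2) ℝ) 1 1
  set p := (B : Matrix (Fin 2) (Fin 2) ℝ) 0 0
  set q := (B : Matrix (Fin 2) (Fin 2) ℝ) 0 1
  set r := (B : Matrix (Fin 2) (Fin 2) ℝ) 1 0
  set s := (B : Matrix (Fin 2) (Fin 2) ℝ) 1 1
  have htrA : trSL A = a + d := by
    simp [trSL, Matrix.trace_fin_two]
    rfl
  have hx : (a + d) ^ 2 ≤ 4 := by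
    rw [htrA] at hA
    have := abs_le.mp hA
    nlinarith [this.1, this.2]
  have hT : trSL (A * B * A⁻¹ * B⁻¹) =
      -(d^2*q*r) + c*d*q*s - c*d*p*q + c^2*q^2 + b*d*r*s - b*d*p*r - b*c*s^2
        - b*c*p^2 + b^2*r^2 + 2*a*d*p*s - a*c*q*s + a*c*p*q - a*b*r*s + a*b*p*r
        - a^2*q*r := by
    simp only [trSL, Matrix.SpecialLinearGroup.coe_mul, Matrix.SpecialLinearGroup.coe_inv]
    simp [Matrix.trace_fin_two, Matrix.mul_apply, Fin.sum_univ_two, Matrix.adjugate_fin_two]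
    ring
  rw [hT]
  exact entry_lemma a b c d p q r s h1 h2 hx
end

section
/- For all m, n ∈ ℕ, the polynomial identity S_{mn}(x) = S_m(S_{n+1}(x) − S_{n-1}(x)) · S_n(x) holds, where S_m is composed with the polynomial S_{n+1}(x) − S_{n-1}(x). -/
/-- Chebyshev S-polynomials for natural indices:
`S 0 = 0`, `S 1 = 1`, `S (n+2) x = x * S (n+1) x - S n x`. -/
noncomputable def chebSNat : ℕ → ℝ → ℝ
  | 0, _ => 0
  | 1, _ => 1
  | n + 2, x => x * chebSNat (n + 1) x - chebSNat n x

/-- Chebyshev S-polynomials for integer indices, with `S m = -S (-m)` for `m < 0`. -/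
noncomputable def chebS (m : ℤ) (x : ℝ) : ℝ :=
  if 0 ≤ m then chebSNat m.toNat x else -chebSNat (-m).toNat x

lemma chebSNat_add_two (n : ℕ) (x : ℝ) :
    chebSNat (n + 2) x = x * chebSNat (n + 1) x - chebSNat n x := rfl

lemma chebS_natCast (n : ℕ) (x : ℝ) : chebS (n : ℤ) x = chebSNat n x := by
  simp [chebS]

lemma chebS_zero (x : ℝ) : chebS 0 x = 0 := by simp [chebS, chebSNat]

lemma chebS_one (x : ℝ) : chebS 1 x = 1 := by simp [chebS]; rfl

lemma chebS_neg (k : ℤ) (x : ℝ) : chebS (-k) x = -chebS k x := by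
  obtain ⟨n, rfl | rfl⟩ := Int.eq_nat_or_neg k
  · cases n with
    | zero => simp [chebS, chebSNat]
    | succ n =>
      simp [chebS, show ¬((n:ℤ) ≤ -1) by omega, show (0:ℤ) ≤ (n:ℤ) + 1 by omega]
  · cases n with
    | zero => simp [chebS, chebSNat]
    | succ n =>
      simp [chebS, show ¬((n:ℤ) ≤ -1) by omega, show (0:ℤ) ≤ (n:ℤ) + 1 by omega]

lemma chebS_rec (k : ℤ) (x : ℝ) :
    chebS (k + 2) x = x * chebS (k + 1) x - chebS k x := by
  obtain ⟨n, rfl | rfl⟩ := Int.eq_nat_or_neg k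
  · rw [show (n : ℤ) + 2 = ((n + 2 : ℕ) : ℤ) by push_cast; ring,
      show (n : ℤ) + 1 = ((n + 1 : ℕ) : ℤ) by push_cast; ring,
      chebS_natCast, chebS_natCast, chebS_natCast, chebSNat_add_two]
  · match n with
    | 0 =>
        norm_num
        rw [show (2 : ℤ) = ((2 : ℕ) : ℤ) by norm_num, chebS_natCast,
          chebS_one, chebS_zero, chebSNat_add_two]
        simp [chebSNat]
    | 1 =>
        norm_num
        rw [chebS_one, chebS_zero, show (-1 : ℤ) = -((1:ℕ) : ℤ) by norm_num,
          chebS_neg, chebS_natCast]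
        simp [chebSNat]
    | (j + 2 : ℕ) =>
        rw [show -((j + 2 : ℕ) : ℤ) + 2 = -((j : ℕ) : ℤ) by push_cast; ring,
          show -((j + 2 : ℕ) : ℤ) + 1 = -((j + 1 : ℕ) : ℤ) by push_cast; ring,
          chebS_neg, chebS_neg, chebS_neg, chebS_natCast, chebS_natCast,
          chebS_natCast, chebSNat_add_two]
        ring

/-- The key product-to-sum identity. -/
lemma chebS_key (x : ℝ) : ∀ (n : ℕ) (a : ℤ),
    chebS (a + n) x + chebS (a - n) x
      = (chebS ((n : ℤ) + 1) x - chebS ((n : ℤ) - 1) x) * chebS a x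
  | 0, a => by
      simp only [Nat.cast_zero, add_zero, sub_zero, zero_add, zero_sub]
      rw [chebS_one, show chebS (-1) x = -chebS 1 x from chebS_neg 1 x, chebS_one]
      ring
  | 1, a => by
      simp only [Nat.cast_one, sub_self]
      rw [chebS_zero, show ((1:ℤ) + 1) = ((0:ℤ) + 2) by ring, chebS_rec]
      simp only [zero_add]
      rw [chebS_one, chebS_zero]
      have h := chebS_rec (a - 1) x
      rw [show a - 1 + 2 = a + 1 by ring, show a - 1 + 1 = a by ring] at h
      rw [h]; ring
  | (n + 2), a => by
      have h1 := chebS_key x (n + 1) a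
      have h0 := chebS_key x n a
      have e1 : chebS (a + (n + 2 : ℕ)) x
          = x * chebS (a + (n + 1 : ℕ)) x - chebS (a + n) x := by
        have := chebS_rec (a + n) x
        rw [show a + n + 2 = a + ((n + 2 : ℕ) : ℤ) by push_cast; ring,
          show a + n + 1 = a + ((n + 1 : ℕ) : ℤ) by push_cast; ring] at this
        exact this
      have e2 : chebS (a - (n + 2 : ℕ)) x
          = x * chebS (a - (n + 1 : ℕ)) x - chebS (a - n) x := by
        have := chebS_rec (a - ((n + 2 : ℕ) : ℤ)) x
        rw [show a - ((n + 2 : ℕ) : ℤ) + 2 = a - n by push_cast; ring,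
          show a - ((n + 2 : ℕ) : ℤ) + 1 = a - ((n + 1 : ℕ) : ℤ) by push_cast; ring] at this
        linarith [this]
      have e3 : chebS (((n + 2 : ℕ) : ℤ) + 1) x
          = x * chebS (((n + 1 : ℕ) : ℤ) + 1) x - chebS ((n : ℤ) + 1) x := by
        have := chebS_rec ((n : ℤ) + 1) x
        rw [show (n : ℤ) + 1 + 2 = ((n + 2 : ℕ) : ℤ) + 1 by push_cast; ring,
          show (n : ℤ) + 1 + 1 = ((n + 1 : ℕ) : ℤ) + 1 by push_cast; ring] at this
        exact this
      have e4 : chebS (((n + 2 : ℕ) : ℤ) - 1) x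
          = x * chebS (((n + 1 : ℕ) : ℤ) - 1) x - chebS ((n : ℤ) - 1) x := by
        have := chebS_rec ((n : ℤ) - 1) x
        rw [show (n : ℤ) - 1 + 2 = ((n + 2 : ℕ) : ℤ) - 1 by push_cast; ring,
          show (n : ℤ) - 1 + 1 = ((n + 1 : ℕ) : ℤ) - 1 by push_cast; ring] at this
        exact this
      rw [e1, e2, e3, e4]
      linear_combination x * h1 - h0


/-- For all `m, n ∈ ℕ`, `S (m*n) x = S m (S (n+1) x - S (n-1) x) * S n x`. -/
theorem chebS_mul (m n : ℕ) (x : ℝ) :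
    chebS ((m : ℤ) * n) x =
      chebS m (chebS (n + 1) x - chebS ((n : ℤ) - 1) x) * chebS n x := by
  set t : ℝ := chebS ((n : ℤ) + 1) x - chebS ((n : ℤ) - 1) x with ht
  induction m using Nat.strong_induction_on with
  | _ m ih =>
    match m with
    | 0 => simp [chebS_zero]
    | 1 => simp [chebS_one]
    | (m + 2) =>
      have h1 := ih (m + 1) (by omega)
      have h0 := ih m (by omega)
      have key := chebS_key x n (((m + 1 : ℕ) : ℤ) * n)
      have e : chebS (((m + 2 : ℕ) : ℤ) * n) x
          = t * chebS (((m + 1 : ℕ) : ℤ) * n) x - chebS ((m : ℤ) * n) x := by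
        have h' : chebS (((m + 1 : ℕ) : ℤ) * n - n) x = chebS ((m : ℤ) * n) x := by
          congr 1; push_cast; ring
        have h'' : (((m + 1 : ℕ) : ℤ) * n + n) = ((m + 2 : ℕ) : ℤ) * n := by
          push_cast; ring
        rw [h'', h', ← ht] at key
        linarith [key]
      have erec : chebS ((m + 2 : ℕ)) t = t * chebS ((m + 1 : ℕ)) t - chebS (m : ℤ) t := by
        have := chebS_rec (m : ℤ) t
        rw [show (m : ℤ) + 2 = ((m + 2 : ℕ) : ℤ) by push_cast; ring,
          show (m : ℤ) + 1 = ((m + 1 : ℕ) : ℤ) by push_cast; ring] at this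
        exact this
      rw [e, h1, h0, erec]
      ring
end

section
/- (Root Formula) Let A be a matrix in SL(2,ℝ) with |tr(A)| ≥ 2 and let n ≥ 1. Then S_n(tr(A)) ≠ 0 and A = (Aⁿ + S_{n-1}(tr(A))·I) / S_n(tr(A)), i.e., S_n(tr(A))·A = Aⁿ + S_{n-1}(tr(A))·I, where I is the 2×2 identity matrix. -/
lemma chebSNat_growth {x : ℝ} (hx : 2 ≤ x) (n : ℕ) :
    0 ≤ chebSNat n x ∧ chebSNat n x + 1 ≤ chebSNat (n + 1) x := by
  induction n with
  | zero => simp [chebSNat]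
  | succ n ih =>
    obtain ⟨h0, h1⟩ := ih
    have h2 : 0 ≤ chebSNat (n + 1) x := by linarith
    refine ⟨h2, ?_⟩
    show chebSNat (n + 1) x + 1 ≤ chebSNat (n + 2) x
    rw [show chebSNat (n + 2) x = x * chebSNat (n + 1) x - chebSNat n x from rfl]
    nlinarith

lemma chebSNat_one_le {x : ℝ} (hx : 2 ≤ x) {n : ℕ} (hn : 1 ≤ n) :
    1 ≤ chebSNat n x := by
  obtain ⟨m, rfl⟩ := Nat.exists_eq_add_of_le hn
  have := (chebSNat_growth hx m).2
  have := (chebSNat_growth hx m).1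
  simpa [add_comm] using by linarith

lemma chebSNat_neg (x : ℝ) (n : ℕ) :
    chebSNat n (-x) = (-1 : ℝ) ^ (n + 1) * chebSNat n x := by
  induction n using Nat.twoStepInduction with
  | zero => simp [chebSNat]
  | one => simp [chebSNat]
  | more n ih1 ih2 =>
    show chebSNat (n + 2) (-x) = _
    rw [show ∀ y, chebSNat (n + 2) y = y * chebSNat (n + 1) y - chebSNat n y
      from fun _ => rfl, ih1, ih2,
      show chebSNat (n + 2) x = x * chebSNat (n + 1) x - chebSNat n x from rfl]
    ring

lemma chebSNat_ne_zero {x : ℝ} (hx : 2 ≤ |x|) {n : ℕ} (hn : 1 ≤ n) :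
    chebSNat n x ≠ 0 := by
  rcases le_or_gt 2 x with hx2 | hx2
  · have := chebSNat_one_le hx2 hn; positivity
  · have hx' : 2 ≤ -x := by
      rcases abs_cases x with ⟨h1, _⟩ | ⟨h1, _⟩ <;> linarith [hx, h1]
    have h1 : 1 ≤ chebSNat n (-x) := chebSNat_one_le hx' hn
    have := chebSNat_neg x n
    rw [this] at h1
    intro h0
    rw [h0, mul_zero] at h1
    linarith

lemma cayley2 (M : Matrix (Fin 2) (Fin 2) ℝ) (h : M.det = 1) :
    M * M = Matrix.trace M • M - 1 := by
  rw [Matrix.det_fin_two] at h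
  ext i j
  fin_cases i <;> fin_cases j <;>
    simp [Matrix.mul_apply, Fin.sum_univ_two, Matrix.trace_fin_two, Matrix.one_apply] <;>
    nlinarith [h]

lemma pow_formula (M : Matrix (Fin 2) (Fin 2) ℝ) (h : M.det = 1) (n : ℕ) :
    M ^ (n + 1) = chebSNat (n + 1) (Matrix.trace M) • M
      - chebSNat n (Matrix.trace M) • (1 : Matrix (Fin 2) (Fin 2) ℝ) := by
  induction n with
  | zero => simp [chebSNat]
  | succ n ih =>
    have : M ^ (n + 2) = M ^ (n + 1) * M := pow_succ M (n+1)
    rw [this, ih, sub_mul, Matrix.smul_mul, Matrix.smul_mul, cayley2 M h, one_mul,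
      show chebSNat (n + 2) (Matrix.trace M)
        = Matrix.trace M * chebSNat (n + 1) (Matrix.trace M) - chebSNat n (Matrix.trace M)
        from rfl]
    rw [smul_sub, smul_smul, sub_smul, mul_comm]
    abel

/-- (Root Formula) If `A ∈ SL(2,ℝ)` with `|tr A| ≥ 2` and `n ≥ 1`, then
`S n (tr A) ≠ 0` and `S n (tr A) • A = Aⁿ + S (n-1) (tr A) • I`. -/
theorem root_formula (A : Matrix.SpecialLinearGroup (Fin 2) ℝ) (n : ℕ) (hn : 1 ≤ n)
    (hA : 2 ≤ |trSL A|) :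
    chebS n (trSL A) ≠ 0 ∧
      chebS n (trSL A) • (A : Matrix (Fin 2) (Fin 2) ℝ) =
        ((A ^ n : Matrix.SpecialLinearGroup (Fin 2) ℝ) : Matrix (Fin 2) (Fin 2) ℝ) +
          chebS ((n : ℤ) - 1) (trSL A) • (1 : Matrix (Fin 2) (Fin 2) ℝ) := by
  obtain ⟨m, rfl⟩ : ∃ m, n = m + 1 := ⟨n - 1, (Nat.succ_pred_eq_of_pos hn).symm⟩
  have hc1 : chebS ((m + 1 : ℕ) : ℤ) (trSL A) = chebSNat (m + 1) (trSL A) := by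
    unfold chebS; rw [if_pos (by positivity)]; simp
  have hc2 : chebS (((m + 1 : ℕ) : ℤ) - 1) (trSL A) = chebSNat m (trSL A) := by
    simp [chebS]
  have hdet : (A : Matrix (Fin 2) (Fin 2) ℝ).det = 1 := A.2
  have hpow := pow_formula (A : Matrix (Fin 2) (Fin 2) ℝ) hdet m
  have hcoe : ((A ^ (m + 1) : Matrix.SpecialLinearGroup (Fin 2) ℝ)
      : Matrix (Fin 2) (Fin 2) ℝ) = (A : Matrix (Fin 2) (Fin 2) ℝ) ^ (m + 1) := by
    simp
  constructor
  · rw [hc1]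
    exact chebSNat_ne_zero hA (Nat.le_add_left 1 m)
  · rw [hc1, hc2, hcoe, hpow, trSL]
    abel
end

section
/- Let R, S be matrices in SL(2,ℝ), let m, n ≥ 1 be integers, set A = Rᵐ and B = Sⁿ, and write x = tr(R), y = tr(S), s_i = S_i(x) and t_i = S_i(y). Then s_m · t_n · tr(R·S) = tr(A·B) + s_{m+1}·t_{n-1} + s_{m-1}·t_{n+1}. -/
lemma chebS_ofNat (m : ℕ) (x : ℝ) : chebS m x = chebSNat m x := by
  simp [chebS]

lemma chebS_add_one (m : ℕ) (x : ℝ) : chebS ((m:ℤ)+1) x = chebSNat (m+1) x := by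
  rw [show ((m:ℤ)+1) = ((m+1:ℕ):ℤ) by push_cast; ring, chebS_ofNat]

lemma chebS_sub_one (m : ℕ) (hm : 1 ≤ m) (x : ℝ) :
    chebS ((m:ℤ)-1) x = chebSNat (m-1) x := by
  obtain ⟨k, rfl⟩ := Nat.exists_eq_add_of_le hm
  rw [show ((1+k:ℕ):ℤ)-1 = ((k:ℕ):ℤ) by push_cast; ring, chebS_ofNat]
  congr 1
  omega

lemma sq_mat (M : Matrix (Fin 2) (Fin 2) ℝ) (hdet : M.det = 1) :
    M * M = (Matrix.trace M) • M - 1 := by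
  rw [Matrix.det_fin_two] at hdet
  ext i j
  fin_cases i <;> fin_cases j <;>
    simp [Matrix.mul_apply, Fin.sum_univ_two, Matrix.trace_fin_two, Matrix.one_apply] <;>
    nlinarith [hdet]

lemma pow_eq (R : Matrix.SpecialLinearGroup (Fin 2) ℝ) (m : ℕ) :
    ((R ^ (m+1) : Matrix.SpecialLinearGroup (Fin 2) ℝ) : Matrix (Fin 2) (Fin 2) ℝ)
      = chebSNat (m+1) (trSL R) • (R : Matrix (Fin 2) (Fin 2) ℝ)
        - chebSNat m (trSL R) • 1 := by
  induction m with
  | zero => simp [chebSNat]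
  | succ k ih =>
    have h2 : (R : Matrix (Fin 2) (Fin 2) ℝ) * R = trSL R • (R : Matrix (Fin 2) (Fin 2) ℝ) - 1 :=
      sq_mat _ (R.2)
    have : ((R ^ (k+2) : Matrix.SpecialLinearGroup (Fin 2) ℝ) : Matrix (Fin 2) (Fin 2) ℝ)
        = ((R ^ (k+1) : Matrix.SpecialLinearGroup (Fin 2) ℝ) : Matrix (Fin 2) (Fin 2) ℝ) * R := by
      rw [← Matrix.SpecialLinearGroup.coe_mul, ← pow_succ]
    rw [this, ih, sub_mul, Matrix.smul_mul, h2, Matrix.smul_mul, one_mul,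
      show chebSNat (k+2) (trSL R) = trSL R * chebSNat (k+1) (trSL R) - chebSNat k (trSL R) from rfl]
    rw [smul_sub, smul_smul]
    module

/-- (Root formulas, trace of `R S`.) Let `R, S ∈ SL(2,ℝ)`, `m, n ≥ 1`, `A = Rᵐ`, `B = Sⁿ`,
`x = tr R`, `y = tr S`, `sᵢ = S_i(x)`, `tᵢ = S_i(y)`. Then
`s_m t_n tr(R S) = tr(A B) + s_{m+1} t_{n-1} + s_{m-1} t_{n+1}`. -/
theorem trace_of_product_of_roots (R S : Matrix.SpecialLinearGroup (Fin 2) ℝ)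
    (m n : ℕ) (hm : 1 ≤ m) (hn : 1 ≤ n) :
    chebS m (trSL R) * chebS n (trSL S) * trSL (R * S) =
      trSL (R ^ m * S ^ n) +
        chebS ((m : ℤ) + 1) (trSL R) * chebS ((n : ℤ) - 1) (trSL S) +
        chebS ((m : ℤ) - 1) (trSL R) * chebS ((n : ℤ) + 1) (trSL S) := by
  obtain ⟨m, rfl⟩ := Nat.exists_eq_add_of_le hm
  obtain ⟨n, rfl⟩ := Nat.exists_eq_add_of_le hn
  rw [add_comm 1 m, add_comm 1 n]
  rw [chebS_ofNat, chebS_ofNat, chebS_add_one, chebS_add_one,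
    chebS_sub_one _ (by omega), chebS_sub_one _ (by omega)]
  have hA := pow_eq R m
  have hB := pow_eq S n
  have key : trSL (R ^ (m+1) * S ^ (n+1))
      = chebSNat (m+1) (trSL R) * chebSNat (n+1) (trSL S) * trSL (R * S)
        - chebSNat (m+1) (trSL R) * chebSNat n (trSL S) * trSL R
        - chebSNat m (trSL R) * chebSNat (n+1) (trSL S) * trSL S
        + 2 * chebSNat m (trSL R) * chebSNat n (trSL S) := by
    rw [trSL, Matrix.SpecialLinearGroup.coe_mul, hA, hB]
    rw [trSL, trSL, trSL, Matrix.SpecialLinearGroup.coe_mul]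
    simp only [sub_mul, mul_sub, Matrix.smul_mul, Matrix.mul_smul, Matrix.mul_one,
      Matrix.one_mul, Matrix.trace_sub, Matrix.trace_smul, smul_smul, smul_eq_mul,
      Matrix.trace_one, Fintype.card_fin, Nat.cast_ofNat]
    ring
  rw [key]
  have hrm : chebSNat (m+2) (trSL R)
      = trSL R * chebSNat (m+1) (trSL R) - chebSNat m (trSL R) := rfl
  have hrn : chebSNat (n+2) (trSL S)
      = trSL S * chebSNat (n+1) (trSL S) - chebSNat n (trSL S) := rfl
  simp only [Nat.add_sub_cancel, show m+1+1 = m+2 by ring, show n+1+1 = n+2 by ring, hrm, hrn]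
  ring
end
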